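/- Label filtering (bottom-up): Let N be a network model, let u and v be two nodes in the same layer L_j, and write V_x := {w(q) : q a directed path from r to x in N} for a node x, and L↑(x) := ND({w(q) : q a directed path from x to t in N}). Suppose ND(ND(V_u) ∪ ND(V_v)) = ND(V_v), and suppose there are labels ℓ^u ∈ L↑(u) and ℓ^v ∈ L↑(v) with ℓ^v ≻ ℓ^u or ℓ^v = ℓ^u. Then ND(⋃_{x ∈ L_j} {w(q) + ℓ : q a directed path from r to x, ℓ ∈ L↑(x)}) = ND(⋃_{x ∈ L_j} {w(q) + ℓ : q a directed path from r to x, ℓ ∈ L'(x)}), where L'(x) = L↑(x) for x ≠ u and L'(u) = L↑(u) \ {ℓ^u}; i.e., removing the label ℓ^u does not change the Pareto frontier P(N). -/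
import Mathlib


open Pointwise

/-- `y` dominates `y'`: componentwise at least as large and not equal. -/
def dominates {K : ℕ} (y y' : Fin K → ℝ) : Prop :=
  (∀ k, y' k ≤ y k) ∧ y ≠ y'

/-- The nondominated subset of `S`. -/
def ND {K : ℕ} (S : Set (Fin K → ℝ)) : Set (Fin K → ℝ) :=
  {y ∈ S | ¬ ∃ y' ∈ S, dominates y' y}

/-- `IsPath tl hd p u v`: the list of arcs `p` forms a directed walk from `u` to `v`. -/
def IsPath {V A : Type*} (tl hd : A → V) : List A → V → V → Prop
  | [], u, v => u = v
  | a :: p, u, v => tl a = u ∧ IsPath tl hd p (hd a) v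

/-- Total weight of a list of arcs. -/
def pathWeight {A : Type*} {K : ℕ} (w : A → Fin K → ℝ) (p : List A) : Fin K → ℝ :=
  (p.map w).sum

/-- A layered-acyclic network model with `n + 1` layers (indexed `1, …, n+1`),
a single root in layer `1`, a single terminal in layer `n+1`, every arc going
from one layer to the next, and `K`-dimensional arc weights. -/
structure Network (V A : Type*) (K : ℕ) where
  tl : A → V
  hd : A → V
  w : A → Fin K → ℝ
  n : ℕ
  layer : V → ℕ
  layer_pos : ∀ v, 1 ≤ layer v
  layer_le : ∀ v, layer v ≤ n + 1
  arc_step : ∀ a, layer (hd a) = layer (tl a) + 1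
  root : V
  terminal : V
  root_layer : layer root = 1
  terminal_layer : layer terminal = n + 1
  root_unique : ∀ v, layer v = 1 → v = root
  terminal_unique : ∀ v, layer v = n + 1 → v = terminal
  layer_nonempty : ∀ j, 1 ≤ j → j ≤ n + 1 → ∃ v, layer v = j

namespace Network

variable {V A : Type*} {K : ℕ}

/-- The set of directed paths from `u` to `v`. -/
def Paths (N : Network V A K) (u v : V) : Set (List A) :=
  {p | IsPath N.tl N.hd p u v}

/-- The set of weights of directed paths from `u` to `v`. -/
def weights (N : Network V A K) (u v : V) : Set (Fin K → ℝ) :=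
  pathWeight N.w '' N.Paths u v

/-- The Pareto frontier of the network. -/
def Pareto (N : Network V A K) : Set (Fin K → ℝ) :=
  ND (N.weights N.root N.terminal)

end Network

lemma dominates_iff_lt {K : ℕ} {y y' : Fin K → ℝ} : dominates y y' ↔ y' < y := by
  constructor
  · rintro ⟨h1, h2⟩
    exact lt_of_le_of_ne (fun k => h1 k) (fun h => h2 h.symm)
  · intro h
    exact ⟨fun k => h.le k, h.ne'⟩

lemma mem_ND {K : ℕ} {S : Set (Fin K → ℝ)} {y : Fin K → ℝ} :
    y ∈ ND S ↔ y ∈ S ∧ ∀ y' ∈ S, ¬ y < y' := by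
  simp [ND, dominates_iff_lt]

lemma exists_ND_ge {K : ℕ} {S : Set (Fin K → ℝ)} (hS : S.Finite) {q : Fin K → ℝ}
    (hq : q ∈ S) : ∃ m ∈ ND S, q ≤ m := by
  haveI := hS.to_subtype
  obtain ⟨b, hb, hbmax⟩ :=
    Finite.exists_le_maximal (α := S) (p := fun _ => True) (a := ⟨q, hq⟩) trivial
  refine ⟨b, mem_ND.mpr ⟨b.2, fun y' hy' hlt => ?_⟩, hb⟩
  exact hlt.not_ge (hbmax.2 (y := ⟨y', hy'⟩) trivial hlt.le)

lemma isPath_layer {V A : Type*} {K : ℕ} (N : Network V A K) :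
    ∀ (p : List A) (x y : V), IsPath N.tl N.hd p x y →
      N.layer y = N.layer x + p.length := by
  intro p
  induction p with
  | nil => intro x y h; cases h; simp
  | cons a p ih =>
    intro x y h
    obtain ⟨h1, h2⟩ := h
    have := ih (N.hd a) y h2
    rw [this, N.arc_step, h1]
    simp; omega

lemma weights_finite {V A : Type*} [Fintype A] {K : ℕ} (N : Network V A K) (x y : V) :
    (N.weights x y).Finite := by
  apply Set.Finite.image
  apply Set.Finite.subset (List.finite_length_le A (N.n + 1))
  intro p hp
  have h := isPath_layer N p x y hp
  have h1 := N.layer_pos x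
  have h2 := N.layer_le y
  simp only [Set.mem_setOf_eq]
  omega

lemma ND_eq_ND_of_subset {K : ℕ} {T S : Set (Fin K → ℝ)} (hTS : T ⊆ S)
    (h : ∀ y ∈ S, ∃ y' ∈ T, y ≤ y') : ND S = ND T := by
  ext y
  rw [mem_ND, mem_ND]
  constructor
  · rintro ⟨hyS, hmax⟩
    obtain ⟨y', hy'T, hle⟩ := h y hyS
    have : y' = y := by
      by_contra hne
      exact hmax y' (hTS hy'T) (lt_of_le_of_ne hle (Ne.symm hne))
    exact ⟨this ▸ hy'T, fun z hz => hmax z (hTS hz)⟩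
  · rintro ⟨hyT, hmax⟩
    refine ⟨hTS hyT, fun z hz hlt => ?_⟩
    obtain ⟨z', hz'T, hle⟩ := h z hz
    exact hmax z' hz'T (lt_of_lt_of_le hlt hle)

/-- **Label filtering (bottom-up).**  Let `u ≠ v` be nodes in the same layer with
`ND(ND(V_u) ∪ ND(V_v)) = ND(V_v)`, where `V_x` is the set of weights of `r`–`x` paths,
and let `ℓu ∈ L↑(u)`, `ℓv ∈ L↑(v)` (bottom-up labels, i.e. the nondominated `x`–`t` path
weights) with `ℓv ≻ ℓu` or `ℓv = ℓu`.  Then removing the label `ℓu` from `L↑(u)` does not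
change the nondominated set obtained by extending the bottom-up labels of the layer back
to the root, i.e. the Pareto frontier. -/
theorem label_filtering_bottom_up {V A : Type*} [Fintype V] [Fintype A] [DecidableEq V]
    {K : ℕ} (N : Network V A K) (u v : V) (huv : u ≠ v)
    (hlayer : N.layer v = N.layer u)
    (hND : ND (ND (N.weights N.root u) ∪ ND (N.weights N.root v)) =
      ND (N.weights N.root v))
    (ℓu ℓv : Fin K → ℝ)
    (hℓu : ℓu ∈ ND (N.weights u N.terminal)) (hℓv : ℓv ∈ ND (N.weights v N.terminal))
    (hdom : dominates ℓv ℓu ∨ ℓv = ℓu) :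
    ND (⋃ x ∈ {x : V | N.layer x = N.layer u},
          N.weights N.root x + ND (N.weights x N.terminal)) =
      ND (⋃ x ∈ {x : V | N.layer x = N.layer u},
          N.weights N.root x +
            (if x = u then ND (N.weights u N.terminal) \ {ℓu}
             else ND (N.weights x N.terminal))) := by
  
  classical
  have hℓle : ℓu ≤ ℓv := by
    rcases hdom with h | h
    · exact fun k => h.1 k
    · exact le_of_eq h.symm
  apply ND_eq_ND_of_subset
  · -- T ⊆ S
    intro y hy
    rw [Set.mem_iUnion₂] at hy ⊢
    obtain ⟨x, hx, hy⟩ := hy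
    refine ⟨x, hx, ?_⟩
    by_cases hxu : x = u
    · subst hxu
      rw [if_pos rfl] at hy
      exact Set.add_subset_add_left Set.diff_subset hy
    · rwa [if_neg hxu] at hy
  · -- every y in S is below some y' in T
    intro y hy
    rw [Set.mem_iUnion₂] at hy
    obtain ⟨x, hx, hy⟩ := hy
    rw [Set.mem_add] at hy
    obtain ⟨q, hq, ℓ, hℓ, hqℓ⟩ := hy
    by_cases hcase : x = u ∧ ℓ = ℓu
    · obtain ⟨hxu, hℓℓu⟩ := hcase
      subst hℓℓu
      rw [hxu] at hq
      -- find q' ∈ V_v with q ≤ q'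
      have hVu := weights_finite N N.root u
      have hVv := weights_finite N N.root v
      obtain ⟨q0, hq0, hqq0⟩ := exists_ND_ge hVu hq
      have hW : (ND (N.weights N.root u) ∪ ND (N.weights N.root v)).Finite :=
        (hVu.subset fun _ h => h.1).union (hVv.subset fun _ h => h.1)
      obtain ⟨q1, hq1, hq01⟩ := exists_ND_ge hW (Or.inl hq0)
      rw [hND] at hq1
      refine ⟨q1 + ℓv, ?_, ?_⟩
      · rw [Set.mem_iUnion₂]
        refine ⟨v, hlayer, ?_⟩
        rw [Set.mem_add]
        exact ⟨q1, hq1.1, ℓv, by rw [if_neg (Ne.symm huv)]; exact hℓv, rfl⟩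
      · rw [← hqℓ]
        exact add_le_add (le_trans hqq0 hq01) hℓle
    · refine ⟨y, ?_, le_refl y⟩
      rw [Set.mem_iUnion₂]
      refine ⟨x, hx, ?_⟩
      rw [Set.mem_add]
      by_cases hxu : x = u
      · subst hxu
        rw [if_pos rfl]
        refine ⟨q, hq, ℓ, ⟨hℓ, ?_⟩, hqℓ⟩
        simp only [Set.mem_singleton_iff]
        exact fun h => hcase ⟨rfl, h⟩
      · rw [if_neg hxu]
        exact ⟨q, hq, ℓ, hℓ, hqℓ⟩
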